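/- arXiv:2103.14434 — 2 statements merged into one kernel-verified Lean document; each statement's English description precedes it below -/
import Mathlib

section
/- For every plan π' solving the extended instance P'_Z, the subsequence of abstracted planning actions in π', with each abstracted action replaced by the original action on the state variables referenced by its pointers at execution time, is a plan solving the original instance P; hence if P'_Z is solvable then P is solvable. -/
/-- A classical planning instance: finite-domain states `S`, deterministic
lifted actions `A` with an applicability condition and a successor function,
an initial state and a goal condition. -/
structure PInst where
  S : Type
  A : Type
  app : A → S → Prop
  succ : A → S → S
  init : S
  goal : S → Prop

/-- Execution of an action sequence (a plan) from a state to a state,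
requiring each action to be applicable when executed. -/
inductive PInst.RunsTo (P : PInst) : List P.A → P.S → P.S → Prop
  | nil (s : P.S) : PInst.RunsTo P [] s s
  | cons (a : P.A) (π : List P.A) (s s' : P.S) :
      P.app a s → PInst.RunsTo P π (P.succ a s) s' →
      PInst.RunsTo P (a :: π) s s'

/-- A plan solves the instance if its execution from the initial state
terminates in a goal state. -/
def PInst.IsSolution (P : PInst) (π : List P.A) : Prop :=
  ∃ s, P.RunsTo π P.init s ∧ P.goal s

def PInst.Solvable (P : PInst) : Prop := ∃ π, P.IsSolution π

/-- The data extending a planning instance (state variables `SX`, actions `A`)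
with a RAM machine whose registers (pointers plus flags) have joint valuation
type `W`:
* abstracted action schemes `A'`, where `ref a' w` is the original action
  referenced by the pointers of `a'` under register valuation `w`, and
  `auxSucc` is the effect of `a'` on the registers;
* RAM actions `R` (inc, dec, cmp, set), always applicable, modifying only
  registers via `ramSucc`;
* initial register valuation `w0` (pointers 0, flags false);
* `reach`: from any register valuation one can execute RAM actions so that
  some abstracted scheme references any desired original action (pointers can
  be moved to any state variables). -/
structure RAMExt (SX A W : Type) where
  A' : Type
  R : Type
  ref : A' → W → A
  auxSucc : A' → W → W
  ramSucc : R → W → W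
  w0 : W
  reach : ∀ (a : A) (w : W), ∃ (rs : List R) (a' : A'),
      ref a' (rs.foldl (fun u r => ramSucc r u) w) = a

/-- The extended classical planning instance `P'_Z`: states are pairs of an
original state and a register valuation; actions are the abstracted schemes
plus the RAM actions; an abstracted scheme behaves on the original variables
exactly like the original action it references; the initial register valuation
is `w0`; the goal is the original goal (on the original variables only). -/
def extInst (P : PInst) (W : Type) (E : RAMExt P.S P.A W) : PInst where
  S := P.S × W
  A := E.A' ⊕ E.R
  app := fun a sw =>
    match a with
    | Sum.inl a' => P.app (E.ref a' sw.2) sw.1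
    | Sum.inr _ => True
  succ := fun a sw =>
    match a with
    | Sum.inl a' => (P.succ (E.ref a' sw.2) sw.1, E.auxSucc a' sw.2)
    | Sum.inr r => (sw.1, E.ramSucc r sw.2)
  init := (P.init, E.w0)
  goal := fun sw => P.goal sw.1

/-- The sequential plan over the original actions obtained from a plan of the
extended instance: drop the RAM actions, and replace each abstracted scheme by
the original action referenced by its pointers at the moment of execution
(the register valuation evolves independently of the original variables). -/
def extract {SX A W : Type} (E : RAMExt SX A W) :
    List (E.A' ⊕ E.R) → W → List A
  | [], _ => []
  | (Sum.inl a') :: l, w => E.ref a' w :: extract E l (E.auxSucc a' w)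
  | (Sum.inr r) :: l, w => extract E l (E.ramSucc r w)

lemma ext_runs {P : PInst} {W : Type} {E : RAMExt P.S P.A W} :
    ∀ (π' : List ((extInst P W E).A)) (sw sw' : P.S × W),
    (extInst P W E).RunsTo π' sw sw' →
    P.RunsTo (extract E π' sw.2) sw.1 sw'.1 := by
  intro π' sw sw' h
  induction h with
  | nil s => exact PInst.RunsTo.nil _
  | cons a l s s' happ _ ih =>
    cases a with
    | inl a' => exact PInst.RunsTo.cons _ _ _ _ happ ih
    | inr r => exact ih

/-- For every plan π' solving the extended instance P'_Z, the
subsequence of abstracted planning actions of π', with each abstracted action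
replaced by the original action referenced by its pointers at execution time,
solves the original instance P; hence if P'_Z is solvable then P is solvable. -/
theorem extension_soundness (P : PInst) (W : Type) (E : RAMExt P.S P.A W) :
    (∀ π' : List ((extInst P W E).A),
      (extInst P W E).IsSolution π' → P.IsSolution (extract E π' E.w0)) ∧
    ((extInst P W E).Solvable → P.Solvable) := by
  constructor
  · intro π' ⟨sw, hr, hg⟩
    exact ⟨sw.1, ext_runs π' _ _ hr, hg⟩
  · rintro ⟨π', hs⟩
    rcases hs with ⟨sw, hr, hg⟩
    exact ⟨_, sw.1, ext_runs π' _ _ hr, hg⟩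
end

section
/- The selection-sort style program ⟨set(j,tail); swap(*i,*j); dec(j); inc(i); cmp(j,i); goto(1, ¬(¬y_z∧¬y_c)); end⟩ with i initialized to 0 reverses any finite list: after termination, the list equals the reverse of the input list. -/
/-- Swap the contents of registers i and j. -/
def swapF {α : Type*} (v : ℕ → α) (i j : ℕ) : ℕ → α :=
  fun k => if k = i then v j else if k = j then v i else v k

/-- The loop of the reverse program: while i < j, swap v[i] ↔ v[j], then
inc(i), dec(j) (this is the effect of lines 1–5 of the program
⟨set(j,tail); swap(*i,*j); dec(j); inc(i); cmp(j,i); goto(1,¬(¬y_z∧¬y_c));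
end⟩, which loops back to line 1 while res = j − i > 0). It terminates. -/
def revLoop {α : Type*} (v : ℕ → α) (i j : ℕ) : ℕ → α :=
  if i < j then revLoop (swapF v i j) (i + 1) (j - 1) else v
  termination_by j - i
  decreasing_by omega

lemma revLoop_spec {α : Type*} : ∀ n (v : ℕ → α) (i j : ℕ), j - i = n →
    ∀ k, revLoop v i j k = if i ≤ k ∧ k ≤ j then v (i + j - k) else v k := by
  intro n
  induction n using Nat.strong_induction_on with
  | _ n ih =>
    intro v i j hn k
    rw [revLoop]
    by_cases h : i < j
    · obtain ⟨j', rfl⟩ : ∃ j', j = j' + 1 := ⟨j - 1, by omega⟩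
      simp only [Nat.add_sub_cancel] at *
      rw [if_pos h, ih (j' - (i + 1)) (by omega) _ _ _ rfl k]
      simp only [swapF]
      by_cases h1 : i + 1 ≤ k ∧ k ≤ j'
      · rw [if_pos h1, if_neg (by omega), if_neg (by omega), if_pos (by omega)]
        congr 1; omega
      · rw [if_neg h1]
        by_cases h2 : i ≤ k ∧ k ≤ j' + 1
        · rw [if_pos h2]
          rcases eq_or_ne k i with rfl | hk
          · rw [if_pos rfl]; congr 1; omega
          · have hk2 : k = j' + 1 := by omega
            subst hk2
            rw [if_neg hk, if_pos rfl]; congr 1; omega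
        · rw [if_neg h2, if_neg (by omega), if_neg (by omega)]
    · rw [if_neg h]
      by_cases h2 : i ≤ k ∧ k ≤ j
      · rw [if_pos h2]; congr 1; omega
      · rw [if_neg h2]

/-- The program ⟨set(j,tail); swap(*i,*j); dec(j); inc(i);
cmp(j,i); goto(1,¬(¬y_z∧¬y_c)); end⟩ with pointer i initialized to 0 and j set
to the last position L−1 reverses any list of length L ≥ 1: after termination
the list equals the reverse of the input list. -/
theorem reverse_program_correct {α : Type*} (v : ℕ → α) (L : ℕ) (hL : 1 ≤ L) :
    ∀ k < L, revLoop v 0 (L - 1) k = v (L - 1 - k) := by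
  intro k hk
  rw [revLoop_spec (L - 1 - 0) v 0 (L - 1) rfl k, if_pos ⟨Nat.zero_le k, by omega⟩]
  congr 1; omega
end
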